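/- arXiv:2311.09119 — 3 statements merged into one kernel-verified Lean document; each statement's English description precedes it below -/
import Mathlib

section
/- Continuity estimate for the p-Laplace flux (Barrett–Liu): for every p ∈ (1, ∞) and every δ ≥ 0 there exists a constant C₁ > 0 such that for all τ₁, τ₂ ∈ ℝ^d with τ₁ ≠ τ₂, |A(τ₁) − A(τ₂)| ≤ C₁ |τ₁ − τ₂|^{1−δ} (|τ₁| + |τ₂|)^{p−2+δ}. -/
/-!
With `q = p - 2` and `‖b‖ ≤ ‖a‖`, split
`A(a) - A(b) = ‖a‖^q (a - b) + (‖a‖^q - ‖b‖^q) b`.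
The second term is controlled by the scalar inequality `|x^q - y^q| y ≤ (1 + |q|) x^q (x - y)`
for `0 ≤ y ≤ x` and `q > -1`, which after scaling is Bernoulli's inequality for `q ≥ 0` and
`t^(q+1) ≤ 1` on `[0, 1]` for `q < 0`. This gives the case `δ = 0`, since `‖a‖` and
`‖a‖ + ‖b‖` are comparable; a positive `δ` only trades a factor `‖a - b‖^δ` for the larger
`(‖a‖ + ‖b‖)^δ`.
-/

/-- The p-Laplace flux `A(τ) = |τ|^{p-2} τ` (with `A(0) = 0`). -/
noncomputable def pFlux (d : ℕ) (p : ℝ) (τ : EuclideanSpace ℝ (Fin d)) :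
    EuclideanSpace ℝ (Fin d) := ‖τ‖ ^ (p - 2) • τ

namespace Real

lemma one_sub_rpow_le_max_mul {t : ℝ} (q : ℝ) (ht0 : 0 < t) (ht1 : t ≤ 1) :
    1 - t ^ q ≤ max 1 q * (1 - t) := by
  have hmono : t ^ max 1 q ≤ t ^ q := rpow_le_rpow_of_exponent_ge ht0 ht1 (le_max_right 1 q)
  have hbernoulli : 1 + max 1 q * (t - 1) ≤ t ^ max 1 q := by
    simpa using one_add_mul_self_le_rpow_one_add (by linarith : -1 ≤ t - 1) (le_max_left 1 q)
  linarith

lemma abs_one_sub_rpow_mul_le {t q : ℝ} (ht0 : 0 ≤ t) (ht1 : t ≤ 1) (hq : -1 < q) :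
    |1 - t ^ q| * t ≤ (1 + |q|) * (1 - t) := by
  rcases ht0.eq_or_lt with rfl | ht0
  · simp only [mul_zero, sub_zero, mul_one]
    positivity
  rcases lt_or_ge q 0 with hq0 | hq0
  · have hpow : t ^ (q + 1) ≤ 1 := rpow_le_one ht0.le ht1 (by linarith)
    rw [rpow_add_one ht0.ne'] at hpow
    rw [abs_sub_comm,
      abs_of_nonneg (sub_nonneg.2 (one_le_rpow_of_pos_of_le_one_of_nonpos ht0 ht1 hq0.le))]
    nlinarith [mul_nonneg (abs_nonneg q) (sub_nonneg.2 ht1)]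
  · have hpow : t ^ q ≤ 1 := rpow_le_one ht0.le ht1 hq0
    have hmax : max 1 q ≤ 1 + |q| :=
      max_le (by linarith [abs_nonneg q]) (by linarith [le_abs_self q])
    rw [abs_of_nonneg (sub_nonneg.2 hpow)]
    nlinarith [one_sub_rpow_le_max_mul q ht0 ht1]

lemma abs_rpow_sub_rpow_mul_le {x y q : ℝ} (hy : 0 ≤ y) (hyx : y ≤ x) (hq : -1 < q) :
    |x ^ q - y ^ q| * y ≤ (1 + |q|) * x ^ q * (x - y) := by
  rcases (hy.trans hyx).eq_or_lt with rfl | hx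
  · obtain rfl : y = 0 := le_antisymm hyx hy
    simp
  obtain ⟨t, ht0, ht1, rfl⟩ : ∃ t, 0 ≤ t ∧ t ≤ 1 ∧ y = x * t :=
    ⟨y / x, div_nonneg hy hx.le, (div_le_one hx).2 hyx, by field_simp⟩
  have hscale := mul_le_mul_of_nonneg_left (abs_one_sub_rpow_mul_le ht0 ht1 hq)
    (mul_nonneg (rpow_nonneg hx.le q) hx.le)
  calc |x ^ q - (x * t) ^ q| * (x * t)
      = x ^ q * x * (|1 - t ^ q| * t) := by
        rw [mul_rpow hx.le ht0, ← mul_one_sub, abs_mul, abs_of_nonneg (rpow_nonneg hx.le q)]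
        ring
    _ ≤ x ^ q * x * ((1 + |q|) * (1 - t)) := hscale
    _ = (1 + |q|) * x ^ q * (x - x * t) := by ring

lemma rpow_le_two_rpow_abs_mul_rpow {x y q : ℝ} (hx : 0 < x) (hxy : x ≤ y) (hyx : y ≤ 2 * x) :
    x ^ q ≤ 2 ^ |q| * y ^ q := by
  rcases le_or_gt 0 q with hq | hq
  · calc x ^ q ≤ y ^ q := rpow_le_rpow hx.le hxy hq
      _ ≤ 2 ^ |q| * y ^ q :=
        le_mul_of_one_le_left (rpow_nonneg (hx.le.trans hxy) q)
          (one_le_rpow one_le_two (abs_nonneg q))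
  · calc x ^ q = 2 ^ (-q) * (2 * x) ^ q := by
          rw [mul_rpow zero_le_two hx.le, ← mul_assoc, ← rpow_add two_pos]
          simp
      _ ≤ 2 ^ |q| * y ^ q := by
          rw [abs_of_neg hq]
          exact mul_le_mul_of_nonneg_left (rpow_le_rpow_of_nonpos (hx.trans_le hxy) hyx hq.le)
            (rpow_nonneg zero_le_two _)

lemma mul_rpow_le_rpow_mul_rpow {x y q δ : ℝ} (hx : 0 ≤ x) (hxy : x ≤ y) (hδ : 0 ≤ δ) :
    x * y ^ q ≤ x ^ (1 - δ) * y ^ (q + δ) := by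
  rcases hx.eq_or_lt with rfl | hx
  · simp only [zero_mul]
    exact mul_nonneg (rpow_nonneg le_rfl _) (rpow_nonneg hxy _)
  have hy : 0 < y := hx.trans_le hxy
  calc x * y ^ q = x ^ (1 - δ) * x ^ δ * y ^ q := by
        rw [← rpow_add hx, sub_add_cancel, rpow_one]
    _ ≤ x ^ (1 - δ) * y ^ δ * y ^ q := by gcongr
    _ = x ^ (1 - δ) * y ^ (q + δ) := by rw [rpow_add hy]; ring

end Real

section pFlux

variable {d : ℕ} {p : ℝ}

lemma pFlux_sub_pFlux (a b : EuclideanSpace ℝ (Fin d)) :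
    pFlux d p a - pFlux d p b =
      ‖a‖ ^ (p - 2) • (a - b) + (‖a‖ ^ (p - 2) - ‖b‖ ^ (p - 2)) • b := by
  simp only [pFlux, smul_sub, sub_smul]
  abel

lemma norm_pFlux_sub_le_of_norm_le (hp : 1 < p) {a b : EuclideanSpace ℝ (Fin d)}
    (hba : ‖b‖ ≤ ‖a‖) :
    ‖pFlux d p a - pFlux d p b‖ ≤ (2 + |p - 2|) * ‖a‖ ^ (p - 2) * ‖a - b‖ := by
  have hscalar := Real.abs_rpow_sub_rpow_mul_le (norm_nonneg b) hba (by linarith : -1 < p - 2)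
  have hnorms : ‖a‖ - ‖b‖ ≤ ‖a - b‖ := norm_sub_norm_le a b
  have hpow : 0 ≤ ‖a‖ ^ (p - 2) := Real.rpow_nonneg (norm_nonneg a) _
  calc ‖pFlux d p a - pFlux d p b‖
      ≤ ‖a‖ ^ (p - 2) * ‖a - b‖ + |‖a‖ ^ (p - 2) - ‖b‖ ^ (p - 2)| * ‖b‖ := by
        rw [pFlux_sub_pFlux]
        refine (norm_add_le _ _).trans_eq ?_
        rw [norm_smul, norm_smul, Real.norm_of_nonneg hpow, Real.norm_eq_abs]
    _ ≤ ‖a‖ ^ (p - 2) * ‖a - b‖ + (1 + |p - 2|) * ‖a‖ ^ (p - 2) * ‖a - b‖ :=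
        add_le_add_right (hscalar.trans (by gcongr)) _
    _ = (2 + |p - 2|) * ‖a‖ ^ (p - 2) * ‖a - b‖ := by ring

lemma norm_pFlux_sub_le (hp : 1 < p) (a b : EuclideanSpace ℝ (Fin d)) :
    ‖pFlux d p a - pFlux d p b‖ ≤
      (2 + |p - 2|) * 2 ^ |p - 2| * ‖a - b‖ * (‖a‖ + ‖b‖) ^ (p - 2) := by
  wlog hba : ‖b‖ ≤ ‖a‖ generalizing a b
  · simpa only [norm_sub_rev, add_comm ‖b‖] using this b a (le_of_not_ge hba)
  rcases (norm_nonneg a).eq_or_lt with ha | ha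
  · have hb : ‖b‖ = 0 := le_antisymm (ha ▸ hba) (norm_nonneg b)
    rw [eq_comm, norm_eq_zero] at ha
    rw [norm_eq_zero] at hb
    simp [ha, hb]
  calc ‖pFlux d p a - pFlux d p b‖ ≤ (2 + |p - 2|) * ‖a‖ ^ (p - 2) * ‖a - b‖ :=
        norm_pFlux_sub_le_of_norm_le hp hba
    _ ≤ (2 + |p - 2|) * (2 ^ |p - 2| * (‖a‖ + ‖b‖) ^ (p - 2)) * ‖a - b‖ := by
        gcongr
        exact Real.rpow_le_two_rpow_abs_mul_rpow ha (by linarith [norm_nonneg b]) (by linarith)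
    _ = (2 + |p - 2|) * 2 ^ |p - 2| * ‖a - b‖ * (‖a‖ + ‖b‖) ^ (p - 2) := by ring

end pFlux

theorem stmt_4_general (d : ℕ) (p : ℝ) (hp : 1 < p) (δ : ℝ) (hδ : 0 ≤ δ) :
    ∃ C₁ > (0 : ℝ), ∀ τ₁ τ₂ : EuclideanSpace ℝ (Fin d), τ₁ ≠ τ₂ →
      ‖pFlux d p τ₁ - pFlux d p τ₂‖ ≤
        C₁ * ‖τ₁ - τ₂‖ ^ (1 - δ) * (‖τ₁‖ + ‖τ₂‖) ^ (p - 2 + δ) := by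
  refine ⟨(2 + |p - 2|) * 2 ^ |p - 2|, by positivity, fun τ₁ τ₂ _ => ?_⟩
  have htrade := Real.mul_rpow_le_rpow_mul_rpow (q := p - 2) (norm_nonneg (τ₁ - τ₂))
    (norm_sub_le τ₁ τ₂) hδ
  rw [mul_assoc _ (‖τ₁ - τ₂‖ ^ (1 - δ))]
  exact ((norm_pFlux_sub_le hp τ₁ τ₂).trans_eq (mul_assoc _ _ _)).trans
    (mul_le_mul_of_nonneg_left htrade (by positivity))

/-- Continuity estimate for the p-Laplace flux (Barrett–Liu): for every
`p ∈ (1, ∞)` and `δ ≥ 0` there is `C₁ > 0` such that for all `τ₁ ≠ τ₂` in `ℝ^d`,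
`|A(τ₁) − A(τ₂)| ≤ C₁ |τ₁ − τ₂|^{1−δ} (|τ₁| + |τ₂|)^{p−2+δ}`. -/
theorem stmt_4 (d : ℕ) (hd : 1 ≤ d) (p : ℝ) (hp : 1 < p) (δ : ℝ) (hδ : 0 ≤ δ) :
    ∃ C₁ > (0 : ℝ), ∀ τ₁ τ₂ : EuclideanSpace ℝ (Fin d), τ₁ ≠ τ₂ →
      ‖pFlux d p τ₁ - pFlux d p τ₂‖ ≤
        C₁ * ‖τ₁ - τ₂‖ ^ (1 - δ) * (‖τ₁‖ + ‖τ₂‖) ^ (p - 2 + δ) :=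
  stmt_4_general d p hp δ hδ
end

section
/- Coerciveness estimate for the p-Laplace flux (Barrett–Liu): for every p ∈ (1, ∞) and every δ ≥ 0 there exists a constant C₂ > 0 such that for all τ₁, τ₂ ∈ ℝ^d with τ₁ ≠ τ₂, (A(τ₁) − A(τ₂)) · (τ₁ − τ₂) ≥ C₂ |τ₁ − τ₂|^{2+δ} (|τ₁| + |τ₂|)^{p−2−δ}. -/
/-!
Write `s = |τ₁|`, `t = |τ₂|`, `r = τ₁ · τ₂`. Both `(A(τ₁) − A(τ₂)) · (τ₁ − τ₂)` and
`|τ₁ − τ₂|² = s² + t² − 2r` are affine in `r`, which ranges over `[−st, st]`, so the case `δ = 0`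
reduces to the two endpoints, i.e. to the scalar inequalities
`c (s − t)² (s + t)^{p−2} ≤ (s − t)(s^{p−1} − t^{p−1})` and `c (s + t)^{p−1} ≤ s^{p−1} + t^{p−1}`
with `c = min (p − 1) 2^{1−p}`. The first follows from concavity of `x ↦ x^{p−1}` when `p ≤ 2`
and from monotonicity of `x ↦ x^{p−2}` when `p > 2`. A positive `δ` only costs the factor
`(|τ₁ − τ₂| / (|τ₁| + |τ₂|))^δ ≤ 1`.
-/

open scoped RealInnerProductSpace

open Real

noncomputable def coercivityConst (p : ℝ) : ℝ := min (p - 1) (2 ^ (1 - p))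

lemma coercivityConst_pos {p : ℝ} (hp : 1 < p) : 0 < coercivityConst p :=
  lt_min (by linarith) (rpow_pos_of_pos two_pos _)

lemma rpow_sub_one_mul_self {x y : ℝ} (hx : 0 ≤ x) (hy : y ≠ 0) : x ^ (y - 1) * x = x ^ y := by
  conv_rhs => rw [← sub_add_cancel y 1, rpow_add' hx (by simpa using hy), rpow_one]

lemma two_rpow_neg_mul_rpow {x q : ℝ} (hx : 0 ≤ x) : 2 ^ (-q) * x ^ q = (x / 2) ^ q := by
  rw [div_rpow hx zero_le_two, rpow_neg zero_le_two, div_eq_inv_mul]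

lemma rpow_le_rpow_add_mul_sub {q s t : ℝ} (hq₀ : 0 ≤ q) (hq₁ : q ≤ 1) (hs : 0 < s)
    (ht : 0 ≤ t) : t ^ q ≤ s ^ q + q * s ^ (q - 1) * (t - s) := by
  have hbernoulli : (t / s) ^ q ≤ 1 + q * (t / s - 1) := by
    simpa using rpow_one_add_le_one_add_mul_self (s := t / s - 1)
      (by linarith [div_nonneg ht hs.le]) hq₀ hq₁
  calc t ^ q = s ^ q * (t / s) ^ q := by rw [div_rpow ht hs.le]; field_simp
    _ ≤ s ^ q * (1 + q * (t / s - 1)) := by gcongr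
    _ = s ^ q + q * s ^ (q - 1) * (t - s) := by rw [rpow_sub_one hs.ne']; field_simp

lemma coercivityConst_mul_sq_le {p s t : ℝ} (hp : 1 < p) (hs : 0 < s) (ht : 0 ≤ t)
    (hts : t ≤ s) :
    coercivityConst p * ((s - t) ^ 2 * (s + t) ^ (p - 2)) ≤
      (s - t) * (s ^ (p - 1) - t ^ (p - 1)) := by
  rcases le_or_gt p 2 with hp2 | hp2
  · have htangent := rpow_le_rpow_add_mul_sub (q := p - 1) (by linarith) (by linarith) hs ht
    rw [show p - 1 - 1 = p - 2 by ring] at htangent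
    have hmono : (s + t) ^ (p - 2) ≤ s ^ (p - 2) :=
      rpow_le_rpow_of_nonpos hs (by linarith) (by linarith)
    calc coercivityConst p * ((s - t) ^ 2 * (s + t) ^ (p - 2))
        ≤ (p - 1) * ((s - t) ^ 2 * s ^ (p - 2)) := by
          gcongr
          exact min_le_left _ _
      _ = (s - t) * ((p - 1) * s ^ (p - 2) * (s - t)) := by ring
      _ ≤ (s - t) * (s ^ (p - 1) - t ^ (p - 1)) := by gcongr; linarith
  · have hpow : t ^ (p - 1) ≤ s ^ (p - 2) * t := by
      rw [← rpow_sub_one_mul_self ht (by linarith : p - 1 ≠ 0), show p - 1 - 1 = p - 2 by ring]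
      gcongr
    have hhalf : 2 ^ (2 - p) * (s + t) ^ (p - 2) ≤ s ^ (p - 2) := by
      rw [show 2 - p = -(p - 2) by ring, two_rpow_neg_mul_rpow (by positivity)]
      gcongr
      linarith
    have hconst : coercivityConst p ≤ 2 ^ (2 - p) :=
      (min_le_right _ _).trans (rpow_le_rpow_of_exponent_le one_le_two (by linarith))
    calc coercivityConst p * ((s - t) ^ 2 * (s + t) ^ (p - 2))
        ≤ 2 ^ (2 - p) * ((s - t) ^ 2 * (s + t) ^ (p - 2)) := by gcongr
      _ = (s - t) ^ 2 * (2 ^ (2 - p) * (s + t) ^ (p - 2)) := by ring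
      _ ≤ (s - t) ^ 2 * s ^ (p - 2) := by gcongr
      _ = (s - t) * (s ^ (p - 2) * s - s ^ (p - 2) * t) := by ring
      _ ≤ (s - t) * (s ^ (p - 1) - t ^ (p - 1)) := by
          rw [← rpow_sub_one_mul_self hs.le (by linarith : p - 1 ≠ 0),
            show p - 1 - 1 = p - 2 by ring]
          gcongr

lemma two_rpow_one_sub_mul_add_rpow_le {p s t : ℝ} (hp : 1 < p) (hs : 0 ≤ s) (ht : 0 ≤ t) :
    2 ^ (1 - p) * (s + t) ^ (p - 1) ≤ s ^ (p - 1) + t ^ (p - 1) := by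
  wlog hts : t ≤ s generalizing s t
  · rw [add_comm s, add_comm (s ^ _)]
    exact this ht hs (by linarith)
  calc 2 ^ (1 - p) * (s + t) ^ (p - 1) = ((s + t) / 2) ^ (p - 1) := by
        rw [show 1 - p = -(p - 1) by ring, two_rpow_neg_mul_rpow (by positivity)]
    _ ≤ s ^ (p - 1) := by gcongr; linarith
    _ ≤ s ^ (p - 1) + t ^ (p - 1) := le_add_of_nonneg_right (by positivity)

lemma sub_mul_nonneg_of_abs_le {u v m r : ℝ} (hr : |r| ≤ m) (hm : 0 ≤ u - v * m)
    (hm' : 0 ≤ u + v * m) : 0 ≤ u - v * r := by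
  obtain ⟨hr₁, hr₂⟩ := abs_le.mp hr
  rcases le_total 0 v with hv | hv <;> nlinarith

lemma coercivityConst_mul_le_of_abs_le {p s t r : ℝ} (hp : 1 < p) (hs : 0 ≤ s) (ht : 0 ≤ t)
    (hst : 0 < s + t) (hr : |r| ≤ s * t) :
    coercivityConst p * ((s ^ 2 + t ^ 2 - 2 * r) * (s + t) ^ (p - 2)) ≤
      s ^ (p - 2) * s ^ 2 + t ^ (p - 2) * t ^ 2 - (s ^ (p - 2) + t ^ (p - 2)) * r := by
  set c := coercivityConst p
  have hp' : p - 1 ≠ 0 := by linarith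
  have pow_mul_self {x : ℝ} (hx : 0 ≤ x) : x ^ (p - 2) * x = x ^ (p - 1) := by
    rw [← rpow_sub_one_mul_self hx hp', show p - 1 - 1 = p - 2 by ring]
  have aligned : c * ((s - t) ^ 2 * (s + t) ^ (p - 2)) ≤
      (s - t) * (s ^ (p - 1) - t ^ (p - 1)) := by
    rcases le_total t s with h | h
    · exact coercivityConst_mul_sq_le hp (by linarith) ht h
    · have := coercivityConst_mul_sq_le hp (by linarith) hs h
      rw [add_comm t s] at this
      linarith
  have opposite : c * (s + t) ^ (p - 1) ≤ s ^ (p - 1) + t ^ (p - 1) :=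
    (mul_le_mul_of_nonneg_right (min_le_right _ _) (by positivity)).trans
      (two_rpow_one_sub_mul_add_rpow_le hp hs ht)
  rw [← pow_mul_self hs, ← pow_mul_self ht] at aligned opposite
  rw [← pow_mul_self hst.le] at opposite
  have := sub_mul_nonneg_of_abs_le
    (u := s ^ (p - 2) * s ^ 2 + t ^ (p - 2) * t ^ 2 - c * (s ^ 2 + t ^ 2) * (s + t) ^ (p - 2))
    (v := s ^ (p - 2) + t ^ (p - 2) - 2 * c * (s + t) ^ (p - 2)) hr
    (by linear_combination aligned) (by linear_combination (s + t) * opposite)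
  linarith

lemma inner_pFlux_sub_pFlux {d : ℕ} {p : ℝ} (a b : EuclideanSpace ℝ (Fin d)) :
    ⟪pFlux d p a - pFlux d p b, a - b⟫ =
      ‖a‖ ^ (p - 2) * ‖a‖ ^ 2 + ‖b‖ ^ (p - 2) * ‖b‖ ^ 2 -
        (‖a‖ ^ (p - 2) + ‖b‖ ^ (p - 2)) * ⟪a, b⟫ := by
  simp only [pFlux, inner_sub_left, inner_sub_right, real_inner_smul_left,
    real_inner_self_eq_norm_sq, real_inner_comm b a]
  ring

theorem coercivityConst_mul_le_inner_pFlux {d : ℕ} {p : ℝ} (hp : 1 < p)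
    {a b : EuclideanSpace ℝ (Fin d)} (hab : a ≠ b) :
    coercivityConst p * (‖a - b‖ ^ 2 * (‖a‖ + ‖b‖) ^ (p - 2)) ≤
      ⟪pFlux d p a - pFlux d p b, a - b⟫ := by
  have hpos : 0 < ‖a‖ + ‖b‖ :=
    (norm_pos_iff.mpr (sub_ne_zero.mpr hab)).trans_le (norm_sub_le a b)
  rw [inner_pFlux_sub_pFlux, norm_sub_sq_real]
  convert coercivityConst_mul_le_of_abs_le hp (norm_nonneg a) (norm_nonneg b) hpos
    (abs_real_inner_le_norm a b) using 3
  ring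

lemma rpow_add_mul_rpow_sub_le {x y a b δ : ℝ} (hx : 0 < x) (hxy : x ≤ y) (hδ : 0 ≤ δ) :
    x ^ (a + δ) * y ^ (b - δ) ≤ x ^ a * y ^ b := by
  have hy := hx.trans_le hxy
  calc x ^ (a + δ) * y ^ (b - δ) = x ^ a * y ^ b * (x ^ δ / y ^ δ) := by
        rw [rpow_add hx, rpow_sub hy]; ring
    _ ≤ x ^ a * y ^ b * 1 := by
        gcongr
        exact div_le_one_of_le₀ (rpow_le_rpow hx.le hxy hδ) (by positivity)
    _ = x ^ a * y ^ b := mul_one _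

theorem stmt_5_general (d : ℕ) (p : ℝ) (hp : 1 < p) (δ : ℝ) (hδ : 0 ≤ δ) :
    ∃ C₂ > (0 : ℝ), ∀ τ₁ τ₂ : EuclideanSpace ℝ (Fin d), τ₁ ≠ τ₂ →
      C₂ * ‖τ₁ - τ₂‖ ^ (2 + δ) * (‖τ₁‖ + ‖τ₂‖) ^ (p - 2 - δ) ≤
        ⟪pFlux d p τ₁ - pFlux d p τ₂, τ₁ - τ₂⟫ := by
  refine ⟨coercivityConst p, coercivityConst_pos hp, fun τ₁ τ₂ hne => ?_⟩
  have hdist : 0 < ‖τ₁ - τ₂‖ := norm_pos_iff.mpr (sub_ne_zero.mpr hne)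
  calc coercivityConst p * ‖τ₁ - τ₂‖ ^ (2 + δ) * (‖τ₁‖ + ‖τ₂‖) ^ (p - 2 - δ)
      ≤ coercivityConst p * (‖τ₁ - τ₂‖ ^ (2 : ℝ) * (‖τ₁‖ + ‖τ₂‖) ^ (p - 2)) := by
        rw [mul_assoc]
        exact mul_le_mul_of_nonneg_left (rpow_add_mul_rpow_sub_le hdist (norm_sub_le τ₁ τ₂) hδ)
          (coercivityConst_pos hp).le
    _ ≤ ⟪pFlux d p τ₁ - pFlux d p τ₂, τ₁ - τ₂⟫ := by
        rw [rpow_two]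
        exact coercivityConst_mul_le_inner_pFlux hp hne

/-- Coerciveness estimate for the p-Laplace flux (Barrett–Liu): for every
`p ∈ (1, ∞)` and `δ ≥ 0` there is `C₂ > 0` such that for all `τ₁ ≠ τ₂` in `ℝ^d`,
`(A(τ₁) − A(τ₂)) · (τ₁ − τ₂) ≥ C₂ |τ₁ − τ₂|^{2+δ} (|τ₁| + |τ₂|)^{p−2−δ}`. -/
theorem stmt_5 (d : ℕ) (hd : 1 ≤ d) (p : ℝ) (hp : 1 < p) (δ : ℝ) (hδ : 0 ≤ δ) :
    ∃ C₂ > (0 : ℝ), ∀ τ₁ τ₂ : EuclideanSpace ℝ (Fin d), τ₁ ≠ τ₂ →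
      C₂ * ‖τ₁ - τ₂‖ ^ (2 + δ) * (‖τ₁‖ + ‖τ₂‖) ^ (p - 2 - δ) ≤
        ⟪pFlux d p τ₁ - pFlux d p τ₂, τ₁ - τ₂⟫ :=
  stmt_5_general d p hp δ hδ
end

section
/- Absorption lemma behind the energy estimates: for every p ∈ (1, ∞) and every C > 0 there exists C' > 0 (depending only on p and C) such that for all nonnegative reals x, a, b, if x^p ≤ C (a x^{p−1} + b x + a^p), then x ≤ C' (a + b^{1/(p−1)}). -/
/-!
Put `M = a + b^{1/(p-1)}`, so that `a ≤ M` and `b ≤ M^{p-1}`. If `x ≤ M` there is nothing to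
prove. Otherwise `M < x`, and with `r = min 1 (p-1)` each of the three terms on the right is at
most `M^r x^{p-r}`; dividing by `x^{p-r}` gives `x^r ≤ 3C M^r`, i.e. `x ≤ (3C)^{1/r} M`.
-/

open Real

theorem rpow_le_rpow_mul_rpow_sub {M x r e : ℝ} (hM : 0 ≤ M) (hMx : M ≤ x) (hr : r ≤ e)
    (he : e ≠ 0) : M ^ e ≤ M ^ r * x ^ (e - r) :=
  calc M ^ e = M ^ r * M ^ (e - r) := by
        rw [← rpow_add' hM (by rwa [add_sub_cancel]), add_sub_cancel]
    _ ≤ M ^ r * x ^ (e - r) := by gcongr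

theorem le_rpow_inv_mul_of_rpow_le {x M c r : ℝ} (hx : 0 ≤ x) (hM : 0 ≤ M) (hc : 0 ≤ c)
    (hr : 0 < r) (h : x ^ r ≤ c * M ^ r) : x ≤ c ^ r⁻¹ * M := by
  have hcM : c ^ r⁻¹ * M = (c * M ^ r) ^ r⁻¹ := by
    rw [mul_rpow hc (rpow_nonneg hM r), rpow_rpow_inv hM hr.ne']
  rwa [hcM, le_rpow_inv_iff_of_pos hx (by positivity) hr]

theorem rpow_min_le_of_le_absorption {p C x a b M : ℝ} (hp : 1 < p) (hC : 0 ≤ C) (ha : 0 ≤ a)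
    (hM : 0 ≤ M) (hMx : M < x) (haM : a ≤ M) (hbM : b ≤ M ^ (p - 1))
    (h : x ^ p ≤ C * (a * x ^ (p - 1) + b * x + a ^ p)) :
    x ^ min 1 (p - 1) ≤ 3 * C * M ^ min 1 (p - 1) := by
  set r := min 1 (p - 1)
  have hr1 : r ≤ 1 := min_le_left _ _
  have hrp : r ≤ p - 1 := min_le_right _ _
  have hx : 0 < x := hM.trans_lt hMx
  have hax : a * x ^ (p - 1) ≤ M ^ r * x ^ (p - r) :=
    calc a * x ^ (p - 1) ≤ M * x ^ (p - 1) := by gcongr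
      _ ≤ M ^ r * x ^ (1 - r) * x ^ (p - 1) := by
          gcongr; simpa using rpow_le_rpow_mul_rpow_sub hM hMx.le hr1 one_ne_zero
      _ = M ^ r * x ^ (p - r) := by rw [mul_assoc, ← rpow_add hx]; ring_nf
  have hbx : b * x ≤ M ^ r * x ^ (p - r) :=
    calc b * x ≤ M ^ (p - 1) * x := by gcongr
      _ ≤ M ^ r * x ^ (p - 1 - r) * x := by
          gcongr; exact rpow_le_rpow_mul_rpow_sub hM hMx.le hrp (by linarith)
      _ = M ^ r * x ^ (p - r) := by rw [mul_assoc, ← rpow_add_one hx.ne']; ring_nf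
  have hap : a ^ p ≤ M ^ r * x ^ (p - r) :=
    calc a ^ p ≤ M ^ p := by gcongr
      _ ≤ M ^ r * x ^ (p - r) := rpow_le_rpow_mul_rpow_sub hM hMx.le (by linarith) (by linarith)
  have key : x ^ r * x ^ (p - r) ≤ 3 * C * M ^ r * x ^ (p - r) :=
    calc x ^ r * x ^ (p - r) = x ^ p := by rw [← rpow_add hx]; ring_nf
      _ ≤ C * (a * x ^ (p - 1) + b * x + a ^ p) := h
      _ ≤ C * (3 * (M ^ r * x ^ (p - r))) := by gcongr; linarith
      _ = 3 * C * M ^ r * x ^ (p - r) := by ring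
  exact le_of_mul_le_mul_right key (rpow_pos_of_pos hx _)

/-- Absorption lemma: for `p ∈ (1, ∞)` and `C > 0` there is `C' > 0`
(depending only on `p, C`) such that for all nonnegative reals `x, a, b`, if
`x^p ≤ C (a x^{p−1} + b x + a^p)` then `x ≤ C' (a + b^{1/(p−1)})`. -/
theorem stmt_11 (p : ℝ) (hp : 1 < p) (C : ℝ) (hC : 0 < C) :
    ∃ C' > (0 : ℝ), ∀ x a b : ℝ, 0 ≤ x → 0 ≤ a → 0 ≤ b →
      x ^ p ≤ C * (a * x ^ (p - 1) + b * x + a ^ p) →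
      x ≤ C' * (a + b ^ (1 / (p - 1))) := by
  set r := min 1 (p - 1)
  have hr : 0 < r := lt_min one_pos (by linarith)
  refine ⟨max 1 ((3 * C) ^ r⁻¹), one_pos.trans_le (le_max_left _ _), ?_⟩
  intro x a b hx ha hb h
  set M := a + b ^ (1 / (p - 1))
  have hM : 0 ≤ M := by positivity
  rcases le_or_gt x M with hxM | hMx
  · calc x ≤ 1 * M := by rwa [one_mul]
      _ ≤ max 1 ((3 * C) ^ r⁻¹) * M := by gcongr; exact le_max_left _ _
  · have haM : a ≤ M := le_add_of_nonneg_right (rpow_nonneg hb _)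
    have hbM : b ≤ M ^ (p - 1) := by
      rw [← rpow_inv_le_iff_of_pos hb hM (by linarith), ← one_div]
      exact le_add_of_nonneg_left ha
    calc x ≤ (3 * C) ^ r⁻¹ * M := le_rpow_inv_mul_of_rpow_le hx hM (by positivity) hr
          (rpow_min_le_of_le_absorption hp hC.le ha hM hMx haM hbM h)
      _ ≤ max 1 ((3 * C) ^ r⁻¹) * M := by gcongr; exact le_max_right _ _
end
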